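/- arXiv:2302.09707 — 3 statements merged into one kernel-verified Lean document; each statement's English description precedes it below -/
import Mathlib

section
/- For every real λ ≥ 1 and every real ξ with 0 < ξ, one has λ·(ξ/√λ − log(1 + ξ/√λ)) ≥ (1/2)·ξ²/(1 + ξ). -/
/-!
Put `x = ξ / √λ`. Since `log t ≤ sinh (log t) = (t - t⁻¹) / 2` for `t ≥ 1`, taking `t = 1 + x`
gives `x - log (1 + x) ≥ x ^ 2 / (2 * (1 + x))`. Multiplying by `λ = √λ ^ 2` turns the right-hand
side into `ξ ^ 2 / (2 * (1 + x))`, which is at least `ξ ^ 2 / (2 * (1 + ξ))` because `x ≤ ξ`.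
-/

open Real

lemma Real.log_le_half_sub_inv {t : ℝ} (ht : 1 ≤ t) : log t ≤ (t - t⁻¹) / 2 := by
  rw [← sinh_log (by linarith)]
  exact self_le_sinh_iff.mpr (log_nonneg ht)

lemma Real.sq_div_two_mul_one_add_le_sub_log {x : ℝ} (hx : 0 ≤ x) :
    x ^ 2 / (2 * (1 + x)) ≤ x - log (1 + x) := by
  have hlog := log_le_half_sub_inv (le_add_of_nonneg_right hx)
  have hx1 : 1 + x ≠ 0 := by positivity
  have hsplit : (1 + x - (1 + x)⁻¹) / 2 = x - x ^ 2 / (2 * (1 + x)) := by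
    field_simp
    ring
  linarith

theorem stmt0 (l ξ : ℝ) (hl : 1 ≤ l) (hξ : 0 < ξ) :
    l * (ξ / Real.sqrt l - Real.log (1 + ξ / Real.sqrt l)) ≥ (1 / 2) * ξ ^ 2 / (1 + ξ) := by
  have hs1 : 1 ≤ √l := one_le_sqrt.mpr hl
  set x := ξ / √l
  have hx0 : 0 ≤ x := by positivity
  have hxξ : x ≤ ξ := div_le_self hξ.le hs1
  have hscale : l * (x ^ 2 / (2 * (1 + x))) = ξ ^ 2 / (2 * (1 + x)) := by
    rw [div_pow, sq_sqrt (by linarith)]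
    field_simp
  calc (1 / 2) * ξ ^ 2 / (1 + ξ) = ξ ^ 2 / (2 * (1 + ξ)) := by field_simp
    _ ≤ ξ ^ 2 / (2 * (1 + x)) := by gcongr
    _ = l * (x ^ 2 / (2 * (1 + x))) := hscale.symm
    _ ≤ l * (x - log (1 + x)) := by
      gcongr
      exact sq_div_two_mul_one_add_le_sub_log hx0
end

section
/- Let λ ∈ ℝ, let Ψ and Γ be p×p symmetric positive definite real matrices, and choose c > 0 such that cI ≺ Ψ and cI ≺ Γ (i.e. Ψ − cI and Γ − cI are positive definite). Then the integral over the cone of p×p symmetric positive definite matrices Σ of tr(Σ)·|Σ|^λ·exp(−tr(ΨΣ) − tr(ΓΣ^{-1})) dΣ is finite. Consequently, a matrix generalized inverse Gaussian distributed random matrix has finite mean of its trace. -/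
open MeasureTheory Matrix

/-- Build a symmetric matrix from its `p(p+1)/2` free entries. -/
def symToMat (p : ℕ) (x : {ij : Fin p × Fin p // ij.1 ≤ ij.2} → ℝ) :
    Matrix (Fin p) (Fin p) ℝ :=
  Matrix.of fun a b => if h : a ≤ b then x ⟨(a, b), h⟩ else x ⟨(b, a), le_of_not_ge h⟩

/-!
Since `Ψ - c I` and `Γ - c I` are positive semidefinite, `tr (Ψ Σ) ≥ c tr Σ` and
`tr (Γ Σ⁻¹) ≥ c tr Σ⁻¹`. Bounding `|Σ| ^ λ` by a power of `tr Σ` (all eigenvalues are at most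
`tr Σ`) when `λ ≥ 0`, or of `tr Σ⁻¹` when `λ < 0`, the factors `exp (-c tr Σ)` and
`exp (-c tr Σ⁻¹)` absorb these powers and leave the integrand below `K exp (-c tr Σ / 2)`.
Every entry of a positive semidefinite `Σ` is at most `tr Σ` in absolute value, so this is
dominated by a product of the integrable functions `exp (-d |x_k|)` of the free entries.
-/

-- From `y e^{-y} ≤ e^{-1}` at `y = b t / a`.
lemma Real.rpow_mul_exp_neg_mul_le {a b t : ℝ} (ha : 0 ≤ a) (hb : 0 < b) (ht : 0 ≤ t) :
    t ^ a * Real.exp (-(b * t)) ≤ (a / (b * Real.exp 1)) ^ a := by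
  rcases ha.eq_or_lt with rfl | ha
  · simpa using Real.exp_le_one_iff.mpr (neg_nonpos.mpr (mul_nonneg hb.le ht))
  have key : t * Real.exp (-(b / a * t)) ≤ a / (b * Real.exp 1) := by
    have := Real.mul_exp_neg_le_exp_neg_one (b / a * t)
    rw [Real.exp_neg 1] at this
    calc t * Real.exp (-(b / a * t)) = a / b * (b / a * t * Real.exp (-(b / a * t))) := by
          field_simp
      _ ≤ a / b * (Real.exp 1)⁻¹ := by gcongr
      _ = a / (b * Real.exp 1) := by field_simp
  calc t ^ a * Real.exp (-(b * t)) = (t * Real.exp (-(b / a * t))) ^ a := by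
        rw [Real.mul_rpow ht (Real.exp_pos _).le, ← Real.exp_mul]
        congr 2
        field_simp
    _ ≤ (a / (b * Real.exp 1)) ^ a := by gcongr

lemma integrable_exp_neg_mul_abs {d : ℝ} (hd : 0 < d) :
    Integrable fun x : ℝ => Real.exp (-(d * |x|)) := by
  rw [← integrableOn_univ, ← Set.Iic_union_Ioi (a := 0)]
  refine IntegrableOn.union ?_ ?_
  · refine (integrableOn_exp_mul_Iic hd 0).congr_fun (fun x hx => ?_) measurableSet_Iic
    simp [abs_of_nonpos (Set.mem_Iic.mp hx)]
  · refine (integrableOn_exp_mul_Ioi (neg_neg_of_pos hd) 0).congr_fun (fun x hx => ?_)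
      measurableSet_Ioi
    simp [abs_of_pos (Set.mem_Ioi.mp hx)]

lemma integrable_prod_exp_neg_mul_abs {ι : Type*} [Fintype ι] {d : ι → ℝ} (hd : ∀ i, 0 < d i) :
    Integrable fun x : ι → ℝ => ∏ i, Real.exp (-(d i * |x i|)) :=
  Integrable.fintype_prod (f := fun i r => Real.exp (-(d i * |r|)))
    fun i => integrable_exp_neg_mul_abs (hd i)

namespace Matrix

variable {n : Type*} [Fintype n]

lemma PosSemidef.two_mul_abs_apply_le {A : Matrix n n ℝ} (hA : A.PosSemidef) (i j : n) :
    2 * |A i j| ≤ A i i + A j j := by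
  classical
  have hsymm : A j i = A i j := by simpa using congrFun₂ hA.isHermitian i j
  have quad (s : ℝ) : 0 ≤ A i i + 2 * s * A i j + s ^ 2 * A j j := by
    have := hA.dotProduct_mulVec_nonneg (Pi.single i 1 + Pi.single j s)
    simp only [star_trivial, mulVec_add, mulVec_single, MulOpposite.op_one, one_smul,
      op_smul_eq_smul, dotProduct_add, add_dotProduct, single_dotProduct, col_apply, one_mul,
      hsymm, dotProduct_smul, smul_eq_mul] at this
    linarith
  cases abs_cases (A i j) <;> linarith [quad 1, quad (-1)]

lemma PosSemidef.abs_apply_le_trace {A : Matrix n n ℝ} (hA : A.PosSemidef) (i j : n) :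
    |A i j| ≤ A.trace := by
  have hdiag (k : n) : A k k ≤ A.trace :=
    Finset.single_le_sum (f := fun k => A k k) (fun k _ => hA.diag_nonneg) (Finset.mem_univ k)
  linarith [hA.two_mul_abs_apply_le i j, hdiag i, hdiag j]

lemma isClosed_setOf_posSemidef : IsClosed {A : Matrix n n ℝ | A.PosSemidef} := by
  simp only [posSemidef_iff_dotProduct_mulVec, Set.ofPred_and, Set.ofPred_forall]
  refine (isClosed_eq continuous_id.matrix_conjTranspose continuous_id).inter
    (isClosed_iInter fun v => isClosed_le continuous_const ?_)
  fun_prop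

variable [DecidableEq n]

lemma PosSemidef.trace_mul_nonneg {A B : Matrix n n ℝ} (hA : A.PosSemidef) (hB : B.PosSemidef) :
    0 ≤ (A * B).trace := by
  open scoped MatrixOrder in
  obtain ⟨R, rfl⟩ := CStarAlgebra.nonneg_iff_eq_star_mul_self.mp hB.nonneg
  rw [← Matrix.mul_assoc, trace_mul_comm, ← Matrix.mul_assoc]
  exact (hA.mul_mul_conjTranspose_same R).trace_nonneg

lemma PosSemidef.smul_trace_le_trace_mul {A B : Matrix n n ℝ} {c : ℝ}
    (hB : (B - c • 1).PosSemidef) (hA : A.PosSemidef) : c * A.trace ≤ (B * A).trace := by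
  have := hB.trace_mul_nonneg hA
  rwa [Matrix.sub_mul, trace_sub, smul_mul, Matrix.one_mul, trace_smul, smul_eq_mul, sub_nonneg]
    at this

lemma PosSemidef.det_le_trace_pow {A : Matrix n n ℝ} (hA : A.PosSemidef) :
    A.det ≤ A.trace ^ Fintype.card n := by
  rw [hA.isHermitian.det_eq_prod_eigenvalues, hA.isHermitian.trace_eq_sum_eigenvalues,
    ← Finset.card_univ, ← Finset.prod_const]
  simp only [RCLike.ofReal_real_eq_id, id]
  exact Finset.prod_le_prod (fun i _ => hA.eigenvalues_nonneg i)
    fun i _ => Finset.single_le_sum (fun j _ => hA.eigenvalues_nonneg j) (Finset.mem_univ i)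

lemma PosSemidef.rpow_det_le {A : Matrix n n ℝ} (hA : A.PosSemidef) {l : ℝ} (hl : 0 ≤ l) :
    A.det ^ l ≤ A.trace ^ (Fintype.card n * l) := by
  rw [Real.rpow_mul hA.trace_nonneg, Real.rpow_natCast]
  exact Real.rpow_le_rpow hA.det_nonneg hA.det_le_trace_pow hl

lemma PosDef.rpow_det_le {A : Matrix n n ℝ} (hA : A.PosDef) (l : ℝ) :
    A.det ^ l ≤
      A.trace ^ (Fintype.card n * max l 0) * A⁻¹.trace ^ (Fintype.card n * max (-l) 0) := by
  rcases le_total 0 l with hl | hl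
  · simpa [max_eq_left hl, max_eq_right (neg_nonpos.mpr hl)] using hA.posSemidef.rpow_det_le hl
  · have hdet : A.det ^ l = A⁻¹.det ^ (-l) := by
      rw [det_nonsing_inv, Ring.inverse_eq_inv', Real.inv_rpow hA.det_pos.le,
        Real.rpow_neg hA.det_pos.le, inv_inv]
    simpa [max_eq_right hl, max_eq_left (neg_nonneg.mpr hl), hdet]
      using hA.inv.posSemidef.rpow_det_le (neg_nonneg.mpr hl)

lemma exists_trace_mul_rpow_det_mul_exp_le (l : ℝ) {c : ℝ} (hc : 0 < c) :
    ∃ K, 0 ≤ K ∧ ∀ A : Matrix n n ℝ, A.PosDef →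
      A.trace * A.det ^ l * Real.exp (-(c * A.trace) - c * A⁻¹.trace) ≤
        K * Real.exp (-(c / 2 * A.trace)) := by
  set a := 1 + Fintype.card n * max l 0
  set b := Fintype.card n * max (-l) 0
  have ha : 0 ≤ a := by positivity
  have hb : 0 ≤ b := by positivity
  refine ⟨(a / (c / 2 * Real.exp 1)) ^ a * (b / (c * Real.exp 1)) ^ b, by positivity,
    fun A hA => ?_⟩
  have ht := hA.posSemidef.trace_nonneg
  have hu := hA.inv.posSemidef.trace_nonneg
  have hsplit : Real.exp (-(c * A.trace) - c * A⁻¹.trace) = Real.exp (-(c / 2 * A.trace)) *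
      Real.exp (-(c * A⁻¹.trace)) * Real.exp (-(c / 2 * A.trace)) := by
    rw [← Real.exp_add, ← Real.exp_add]
    ring_nf
  calc A.trace * A.det ^ l * Real.exp (-(c * A.trace) - c * A⁻¹.trace)
      ≤ A.trace * (A.trace ^ (Fintype.card n * max l 0) * A⁻¹.trace ^ b) *
          Real.exp (-(c * A.trace) - c * A⁻¹.trace) := by
        gcongr
        exact hA.rpow_det_le l
    _ = (A.trace ^ a * Real.exp (-(c / 2 * A.trace))) *
          (A⁻¹.trace ^ b * Real.exp (-(c * A⁻¹.trace))) * Real.exp (-(c / 2 * A.trace)) := by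
        rw [hsplit, Real.rpow_add' ht (by positivity), Real.rpow_one]
        ring
    _ ≤ (a / (c / 2 * Real.exp 1)) ^ a * (b / (c * Real.exp 1)) ^ b *
          Real.exp (-(c / 2 * A.trace)) := by
        gcongr
        · exact Real.rpow_mul_exp_neg_mul_le ha (half_pos hc) ht
        · exact Real.rpow_mul_exp_neg_mul_le hb hc hu

lemma continuousOn_trace_mul_rpow_det_mul_exp (l : ℝ) (Ψ Γ : Matrix n n ℝ) :
    ContinuousOn (fun A : Matrix n n ℝ =>
      A.trace * A.det ^ l * Real.exp (-(Ψ * A).trace - (Γ * A⁻¹).trace)) {A | A.PosDef} := by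
  intro A hA
  have hinv : ContinuousAt Inv.inv A := continuousAt_matrix_inv A <| by
    rw [Ring.inverse_eq_inv']
    exact continuousAt_inv₀ hA.det_pos.ne'
  have hdet : ContinuousAt (fun B : Matrix n n ℝ => B.det ^ l) A :=
    continuous_id.matrix_det.continuousAt.rpow_const (Or.inl hA.det_pos.ne')
  refine ContinuousAt.continuousWithinAt ?_
  fun_prop

lemma measurableSet_setOf_posDef {X : Type*} [TopologicalSpace X] [MeasurableSpace X]
    [OpensMeasurableSpace X] {f : X → Matrix n n ℝ} (hf : Continuous f) :
    MeasurableSet {x | (f x).PosDef} := by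
  have : {x | (f x).PosDef} = f ⁻¹' {A | A.PosSemidef} ∩ {x | (f x).det ≠ 0} := by
    ext x
    exact ⟨fun h => ⟨h.posSemidef, h.det_pos.ne'⟩, fun h => h.1.posDef_iff_det_ne_zero.mpr h.2⟩
  rw [this]
  exact (isClosed_setOf_posSemidef.preimage hf).measurableSet.inter
    (isOpen_ne_fun hf.matrix_det continuous_const).measurableSet

end Matrix

lemma symToMat_apply (p : ℕ) (x : {ij : Fin p × Fin p // ij.1 ≤ ij.2} → ℝ)
    (k : {ij : Fin p × Fin p // ij.1 ≤ ij.2}) : symToMat p x k.1.1 k.1.2 = x k := by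
  simp [symToMat, k.2]

lemma continuous_symToMat (p : ℕ) : Continuous (symToMat p) := by
  refine continuous_matrix fun a b => ?_
  by_cases h : a ≤ b <;> simp only [symToMat, of_apply, h, dite_true, dite_false] <;>
    exact continuous_apply _

lemma exp_neg_mul_trace_symToMat_le_prod (p : ℕ) {c : ℝ} (hc : 0 ≤ c)
    {x : {ij : Fin p × Fin p // ij.1 ≤ ij.2} → ℝ} (hx : (symToMat p x).PosSemidef) :
    Real.exp (-(c * (symToMat p x).trace)) ≤
      ∏ k, Real.exp (-(c / Fintype.card {ij : Fin p × Fin p // ij.1 ≤ ij.2} * |x k|)) := by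
  set N := Fintype.card {ij : Fin p × Fin p // ij.1 ≤ ij.2}
  rw [← Real.exp_sum, Real.exp_le_exp, Finset.sum_neg_distrib, ← Finset.mul_sum, neg_le_neg_iff]
  have hsum : ∑ k, |x k| ≤ N * (symToMat p x).trace :=
    calc ∑ k, |x k| ≤ ∑ _k : {ij : Fin p × Fin p // ij.1 ≤ ij.2}, (symToMat p x).trace :=
          Finset.sum_le_sum fun k _ => symToMat_apply p x k ▸ hx.abs_apply_le_trace _ _
      _ = N * (symToMat p x).trace := by simp [N]
  calc c / N * ∑ k, |x k| ≤ c / N * (N * (symToMat p x).trace) := by gcongr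
    _ = c / N * N * (symToMat p x).trace := by ring
    _ ≤ c * (symToMat p x).trace := by
        gcongr
        · exact hx.trace_nonneg
        · rcases eq_or_ne (N : ℝ) 0 with hN | hN <;> simp [hN, hc]

theorem stmt10_general (p : ℕ) (l c : ℝ) (Ψ Γ : Matrix (Fin p) (Fin p) ℝ)
    (hc : 0 < c)
    (hΨc : (Ψ - c • (1 : Matrix (Fin p) (Fin p) ℝ)).PosDef)
    (hΓc : (Γ - c • (1 : Matrix (Fin p) (Fin p) ℝ)).PosDef) :
    IntegrableOn
      (fun x : {ij : Fin p × Fin p // ij.1 ≤ ij.2} → ℝ =>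
        (symToMat p x).trace * (symToMat p x).det ^ l *
          Real.exp (-((Ψ * symToMat p x).trace) - ((Γ * (symToMat p x)⁻¹).trace)))
      {x | (symToMat p x).PosDef} volume := by
  have hS := measurableSet_setOf_posDef (continuous_symToMat p)
  obtain ⟨K, hK, hbound⟩ := exists_trace_mul_rpow_det_mul_exp_le (n := Fin p) l hc
  have hdom : Integrable fun x : {ij : Fin p × Fin p // ij.1 ≤ ij.2} → ℝ =>
      K * ∏ k, Real.exp (-(c / 2 / Fintype.card {ij : Fin p × Fin p // ij.1 ≤ ij.2} * |x k|)) :=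
    (integrable_prod_exp_neg_mul_abs fun k => by
      have : 0 < Fintype.card {ij : Fin p × Fin p // ij.1 ≤ ij.2} := Fintype.card_pos_iff.mpr ⟨k⟩
      positivity).const_mul K
  refine hdom.integrableOn.mono' (((continuousOn_trace_mul_rpow_det_mul_exp l Ψ Γ).comp
    (continuous_symToMat p).continuousOn fun x hx => hx).aestronglyMeasurable hS)
    (ae_restrict_of_forall_mem hS fun x (hA : (symToMat p x).PosDef) => ?_)
  set A := symToMat p x
  have hexp : -(Ψ * A).trace - (Γ * A⁻¹).trace ≤ -(c * A.trace) - c * A⁻¹.trace := by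
    linarith [hΨc.posSemidef.smul_trace_le_trace_mul hA.posSemidef,
      hΓc.posSemidef.smul_trace_le_trace_mul hA.inv.posSemidef]
  have hnonneg : 0 ≤ A.trace * A.det ^ l :=
    mul_nonneg hA.posSemidef.trace_nonneg (Real.rpow_nonneg hA.det_pos.le l)
  calc ‖A.trace * A.det ^ l * Real.exp (-(Ψ * A).trace - (Γ * A⁻¹).trace)‖
      = A.trace * A.det ^ l * Real.exp (-(Ψ * A).trace - (Γ * A⁻¹).trace) :=
        Real.norm_of_nonneg (mul_nonneg hnonneg (Real.exp_pos _).le)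
    _ ≤ A.trace * A.det ^ l * Real.exp (-(c * A.trace) - c * A⁻¹.trace) := by gcongr
    _ ≤ K * Real.exp (-(c / 2 * A.trace)) := hbound A hA
    _ ≤ _ := by
        gcongr
        exact exp_neg_mul_trace_symToMat_le_prod p (half_pos hc).le hA.posSemidef

theorem stmt10 (p : ℕ) (l c : ℝ) (Ψ Γ : Matrix (Fin p) (Fin p) ℝ)
    (hΨ : Ψ.PosDef) (hΓ : Γ.PosDef) (hc : 0 < c)
    (hΨc : (Ψ - c • (1 : Matrix (Fin p) (Fin p) ℝ)).PosDef)
    (hΓc : (Γ - c • (1 : Matrix (Fin p) (Fin p) ℝ)).PosDef) :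
    IntegrableOn
      (fun x : {ij : Fin p × Fin p // ij.1 ≤ ij.2} → ℝ =>
        (symToMat p x).trace * (symToMat p x).det ^ l *
          Real.exp (-((Ψ * symToMat p x).trace) - ((Γ * (symToMat p x)⁻¹).trace)))
      {x | (symToMat p x).PosDef} volume :=
  stmt10_general p l c Ψ Γ hc hΨc hΓc
end

section
/- Let p ≥ 2, let Ψ be p×p symmetric positive definite, let P be the p×p 'flip' permutation matrix with ones on the anti-diagonal, let Ψ̃^{1/2} be the lower-triangular Cholesky factor of PΨP (so Ψ̃^{1/2}(Ψ̃^{1/2})ᵀ = PΨP), and let S be any p×p symmetric positive semidefinite matrix. Fix i ∈ {1,…,p−1} and let U_i Λ_i U_iᵀ = ((Ψ̃^{-1/2}) P S P (Ψ̃^{-1/2})ᵀ)_{1:(p−i),1:(p−i)} be a spectral decomposition of the leading (p−i)×(p−i) principal submatrix, with U_i orthogonal and Λ_i diagonal. Then for all α, μ > 0: α (Ψ)_{(i+1):p,(i+1):p} + μ (S)_{(i+1):p,(i+1):p} = P^{(p−i)} (Ψ̃^{1/2})_{1:(p−i),1:(p−i)} U_i (α I + μ Λ_i) U_iᵀ ((Ψ̃^{1/2})_{1:(p−i),1:(p−i)})ᵀ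 P^{(p−i)}, where P^{(p−i)} is the (p−i)×(p−i) anti-diagonal permutation matrix. -/
/-!
Conjugation by the flip matrices turns the trailing `(p - i)`-blocks of `Ψ` and `S` into the leading
blocks of `PΨP` and `PSP`. For lower triangular `L` the leading block of `L X Lᵀ` is `L₁ X₁ L₁ᵀ`,
where `₁` marks leading blocks. Applied to `PΨP = L Lᵀ` and to `PSP = L (L⁻¹ PSP L⁻ᵀ) Lᵀ`, this gives
`(PΨP)₁ = L₁ L₁ᵀ` and `(PSP)₁ = L₁ U Λ Uᵀ L₁ᵀ`; since `U Uᵀ = 1`, the identity follows by linearity.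
-/

open Matrix

/-- The anti-diagonal ("flip") permutation matrix. -/
def flipMat (n : ℕ) : Matrix (Fin n) (Fin n) ℝ :=
  Matrix.of fun h j => if j = h.rev then 1 else 0

theorem Fin.sum_univ_eq_sum_castLE_of_eq_zero {M : Type*} [AddCommMonoid M] {n p : ℕ}
    (h : n ≤ p) (f : Fin p → M) (hf : ∀ k : Fin p, n ≤ (k : ℕ) → f k = 0) :
    ∑ k, f k = ∑ a : Fin n, f (Fin.castLE h a) := by
  refine Eq.trans ?_ (Finset.sum_map Finset.univ (Fin.castLEEmb h) f)
  refine (Finset.sum_subset (Finset.subset_univ _) fun k _ hk => hf k ?_).symm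
  by_contra! hlt
  exact hk (Finset.mem_map.2 ⟨⟨k, hlt⟩, Finset.mem_univ _, rfl⟩)

namespace Matrix

section LeadingSubmatrix

variable {R : Type*} [NonUnitalNonAssocSemiring R] {n p : ℕ} (h : n ≤ p)

theorem submatrix_castLE_mul_of_forall_eq_zero {A B : Matrix (Fin p) (Fin p) R}
    (hAB : ∀ (a b : Fin n) (k : Fin p), n ≤ (k : ℕ) →
      A (Fin.castLE h a) k * B k (Fin.castLE h b) = 0) :
    (A * B).submatrix (Fin.castLE h) (Fin.castLE h) =
      A.submatrix (Fin.castLE h) (Fin.castLE h) * B.submatrix (Fin.castLE h) (Fin.castLE h) := by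
  ext a b
  exact Fin.sum_univ_eq_sum_castLE_of_eq_zero h _ (hAB a b)

variable {L : Matrix (Fin p) (Fin p) R}

theorem IsLowerTriangular.submatrix_castLE_mul (hL : L.IsLowerTriangular)
    (X : Matrix (Fin p) (Fin p) R) :
    (L * X).submatrix (Fin.castLE h) (Fin.castLE h) =
      L.submatrix (Fin.castLE h) (Fin.castLE h) * X.submatrix (Fin.castLE h) (Fin.castLE h) :=
  submatrix_castLE_mul_of_forall_eq_zero h fun a _ k hk => by
    rw [hL (OrderDual.toDual_lt_toDual.2 (Fin.lt_def.2 (a.isLt.trans_le hk))), zero_mul]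

theorem IsLowerTriangular.submatrix_castLE_mul_transpose (hL : L.IsLowerTriangular)
    (X : Matrix (Fin p) (Fin p) R) :
    (X * Lᵀ).submatrix (Fin.castLE h) (Fin.castLE h) =
      X.submatrix (Fin.castLE h) (Fin.castLE h) * (L.submatrix (Fin.castLE h) (Fin.castLE h))ᵀ :=
  submatrix_castLE_mul_of_forall_eq_zero h fun _ b k hk => by
    rw [transpose_apply, hL (OrderDual.toDual_lt_toDual.2 (Fin.lt_def.2 (b.isLt.trans_le hk))),
      mul_zero]

theorem IsLowerTriangular.submatrix_castLE_mul_mul_transpose (hL : L.IsLowerTriangular)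
    (X : Matrix (Fin p) (Fin p) R) :
    (L * X * Lᵀ).submatrix (Fin.castLE h) (Fin.castLE h) =
      L.submatrix (Fin.castLE h) (Fin.castLE h) * X.submatrix (Fin.castLE h) (Fin.castLE h) *
        (L.submatrix (Fin.castLE h) (Fin.castLE h))ᵀ := by
  rw [hL.submatrix_castLE_mul_transpose, hL.submatrix_castLE_mul]

end LeadingSubmatrix

theorem mul_nonsing_inv_mul_mul_transpose_mul_transpose {R : Type*} [CommRing R] {p : Type*}
    [Fintype p] [DecidableEq p] (L : Matrix p p R) [Invertible L] (X : Matrix p p R) :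
    L * (L⁻¹ * X * L⁻¹ᵀ) * Lᵀ = X := by
  calc L * (L⁻¹ * X * L⁻¹ᵀ) * Lᵀ = L * L⁻¹ * X * (L * L⁻¹)ᵀ := by
        rw [transpose_mul]; simp only [mul_assoc]
    _ = X := by rw [mul_inv_of_invertible, transpose_one, one_mul, mul_one]

end Matrix

theorem flipMat_mul {n : ℕ} (A : Matrix (Fin n) (Fin n) ℝ) :
    flipMat n * A = A.submatrix Fin.rev id := by
  ext a b
  simp [flipMat, mul_apply]

theorem mul_flipMat {n : ℕ} (A : Matrix (Fin n) (Fin n) ℝ) :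
    A * flipMat n = A.submatrix id Fin.rev := by
  ext a b
  simp [flipMat, mul_apply, eq_comm (a := b), Fin.rev_eq_iff]

theorem flipMat_conj_submatrix_castLE_flipMat_conj {m p : ℕ} (h : m ≤ p)
    (X : Matrix (Fin p) (Fin p) ℝ) {e : Fin m → Fin p} (he : ∀ k, (e k : ℕ) = p - m + k) :
    flipMat m * (flipMat p * X * flipMat p).submatrix (Fin.castLE h) (Fin.castLE h) * flipMat m =
      X.submatrix e e := by
  rw [flipMat_mul, mul_flipMat, flipMat_mul, mul_flipMat]
  ext a b
  simp only [submatrix_apply, id_eq]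
  congr 1 <;>
  · ext
    simp only [Fin.val_rev, Fin.val_castLE, he]
    omega

theorem stmt19 (p : ℕ) (Ψ S L : Matrix (Fin p) (Fin p) ℝ)
    (hLlow : ∀ h j : Fin p, h < j → L h j = 0) (hLdiag : ∀ j, 0 < L j j)
    (hL : L * Lᵀ = flipMat p * Ψ * flipMat p)
    (i : ℕ)
    (U : Matrix (Fin (p - i)) (Fin (p - i)) ℝ) (d : Fin (p - i) → ℝ)
    (hU1 : U * Uᵀ = 1)
    (hspec : U * Matrix.diagonal d * Uᵀ =
      (L⁻¹ * flipMat p * S * flipMat p * (L⁻¹)ᵀ).submatrix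
        (Fin.castLE (Nat.sub_le p i)) (Fin.castLE (Nat.sub_le p i))) :
    ∀ α μ : ℝ, 0 < α → 0 < μ →
      α • Ψ.submatrix (fun k : Fin (p - i) => (⟨i + k.val, by have := k.isLt; omega⟩ : Fin p))
            (fun k : Fin (p - i) => (⟨i + k.val, by have := k.isLt; omega⟩ : Fin p)) +
          μ • S.submatrix (fun k : Fin (p - i) => (⟨i + k.val, by have := k.isLt; omega⟩ : Fin p))
            (fun k : Fin (p - i) => (⟨i + k.val, by have := k.isLt; omega⟩ : Fin p))
        = flipMat (p - i) *
            (L.submatrix (Fin.castLE (Nat.sub_le p i)) (Fin.castLE (Nat.sub_le p i))) * U *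
            (α • (1 : Matrix (Fin (p - i)) (Fin (p - i)) ℝ) + μ • Matrix.diagonal d) * Uᵀ *
            (L.submatrix (Fin.castLE (Nat.sub_le p i)) (Fin.castLE (Nat.sub_le p i)))ᵀ *
            flipMat (p - i) := by
  intro α μ _ _
  have hLlt : L.IsLowerTriangular := fun a b hab => hLlow a b hab
  have : Invertible L := invertibleOfIsUnitDet L <| by
    rw [det_of_isLowerTriangular L hLlt]
    exact (Finset.prod_pos fun j _ => hLdiag j).ne'.isUnit
  have hΨ₁ := hLlt.submatrix_castLE_mul_mul_transpose (Nat.sub_le p i) 1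
  rw [mul_one, hL, submatrix_one _ (Fin.castLE_injective _), mul_one] at hΨ₁
  have hS₁ := hLlt.submatrix_castLE_mul_mul_transpose (Nat.sub_le p i)
    (L⁻¹ * flipMat p * S * flipMat p * L⁻¹ᵀ)
  rw [← hspec, show L⁻¹ * flipMat p * S * flipMat p * L⁻¹ᵀ =
    L⁻¹ * (flipMat p * S * flipMat p) * L⁻¹ᵀ by simp only [mul_assoc],
    mul_nonsing_inv_mul_mul_transpose_mul_transpose] at hS₁
  set L₁ := L.submatrix (Fin.castLE (Nat.sub_le p i)) (Fin.castLE (Nat.sub_le p i))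
  have hmid : U * (α • 1 + μ • diagonal d) * Uᵀ = α • 1 + μ • (U * diagonal d * Uᵀ) := by
    rw [Matrix.mul_add, Matrix.add_mul, Matrix.mul_smul, Matrix.mul_one, Matrix.smul_mul, hU1,
      Matrix.mul_smul, Matrix.smul_mul]
  have htrail (k : Fin (p - i)) : i + (k : ℕ) = p - (p - i) + k := by omega
  rw [← flipMat_conj_submatrix_castLE_flipMat_conj (Nat.sub_le p i) Ψ htrail,
    ← flipMat_conj_submatrix_castLE_flipMat_conj (Nat.sub_le p i) S htrail, hΨ₁, hS₁]
  calc _ = flipMat (p - i) * (L₁ * (α • 1 + μ • (U * diagonal d * Uᵀ)) * L₁ᵀ) *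
        flipMat (p - i) := by
        simp only [Matrix.mul_add, Matrix.add_mul, Matrix.mul_smul, Matrix.smul_mul, Matrix.mul_one]
    _ = _ := by rw [← hmid]; simp only [mul_assoc]
end
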